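/- arXiv:2603.25454 — 2 statements merged into one kernel-verified Lean document; each statement's English description precedes it below -/
import Mathlib

section
/- Let x = (x0, x1, x2, x3) and y = (y0, y1, y2, y3) be quadruples of real numbers and let i denote the imaginary unit. Then the determinant of the complex 4×4 matrix whose rows are (1, 0, y0 + y3, y1 − i·y2), (0, 1, y1 + i·y2, y0 − y3), (1, 0, x0 + x3, x1 − i·x2), (0, 1, x1 + i·x2, x0 − x3) equals (x0 − y0)^2 − (x1 − y1)^2 − (x2 − y2)^2 − (x3 − y3)^2. In particular this determinant is real, and it vanishes if and only if the Lorentzian square of x − y vanishes. -/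
/-- **Momentum twistor incidence.**
For quadruples of reals `x = (x0,x1,x2,x3)` and `y = (y0,y1,y2,y3)`, the determinant of the
complex 4×4 matrix whose rows are `(1, 0, y0+y3, y1−i·y2)`, `(0, 1, y1+i·y2, y0−y3)`,
`(1, 0, x0+x3, x1−i·x2)`, `(0, 1, x1+i·x2, x0−x3)` equals the (real) Lorentzian square
`(x0−y0)² − (x1−y1)² − (x2−y2)² − (x3−y3)²`.  In particular the determinant is real, and it
vanishes if and only if the Lorentzian square of `x − y` vanishes. -/
theorem momentum_twistor_incidence
    (x0 x1 x2 x3 y0 y1 y2 y3 : ℝ)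
    (M : Matrix (Fin 4) (Fin 4) ℂ)
    (hM : M = !![1, 0, (y0 : ℂ) + (y3 : ℂ), (y1 : ℂ) - Complex.I * (y2 : ℂ);
                 0, 1, (y1 : ℂ) + Complex.I * (y2 : ℂ), (y0 : ℂ) - (y3 : ℂ);
                 1, 0, (x0 : ℂ) + (x3 : ℂ), (x1 : ℂ) - Complex.I * (x2 : ℂ);
                 0, 1, (x1 : ℂ) + Complex.I * (x2 : ℂ), (x0 : ℂ) - (x3 : ℂ)]) :
    M.det = (((x0 - y0) ^ 2 - (x1 - y1) ^ 2 - (x2 - y2) ^ 2 - (x3 - y3) ^ 2 : ℝ) : ℂ) ∧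
    (M.det = 0 ↔
      (x0 - y0) ^ 2 - (x1 - y1) ^ 2 - (x2 - y2) ^ 2 - (x3 - y3) ^ 2 = 0) := by
  subst hM
  have hdet : (!![1, 0, (y0 : ℂ) + (y3 : ℂ), (y1 : ℂ) - Complex.I * (y2 : ℂ);
                 0, 1, (y1 : ℂ) + Complex.I * (y2 : ℂ), (y0 : ℂ) - (y3 : ℂ);
                 1, 0, (x0 : ℂ) + (x3 : ℂ), (x1 : ℂ) - Complex.I * (x2 : ℂ);
                 0, 1, (x1 : ℂ) + Complex.I * (x2 : ℂ), (x0 : ℂ) - (x3 : ℂ)]).det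
      = (((x0 - y0) ^ 2 - (x1 - y1) ^ 2 - (x2 - y2) ^ 2 - (x3 - y3) ^ 2 : ℝ) : ℂ) := by
    simp [Matrix.det_succ_row_zero, Fin.sum_univ_succ, Fin.succAbove, Fin.castSucc, Fin.castAdd, Fin.castLE]
    have h : Complex.I * Complex.I = -1 := Complex.I_mul_I
    ring_nf
    rw [Complex.I_sq]
    ring
  refine ⟨hdet, ?_⟩
  rw [hdet]
  exact_mod_cast Iff.rfl
end

section
/- Let k be a field of characteristic different from 2, and let W_1, …, W_5 be 2-dimensional subspaces of k^4, with W_i spanned by vectors w_{i,1}, w_{i,2}. If there exists a 2-dimensional subspace T of k^4 with T ∩ W_i ≠ {0} for every i = 1, …, 5 (a common transversal line of the five lines), then the determinant of the 5×5 Gram matrix of W_1, …, W_5 (zero diagonal, off-diagonal (i,j) entry det[w_{i,1} w_{i,2} w_{j,1} w_{j,2}]) is zero. -/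
/-- The determinant of the 4×4 matrix with columns `w, x, y, z`. -/
def det4 {k : Type*} [CommRing k] (w x y z : Fin 4 → k) : k :=
  Matrix.det (Matrix.of fun i j => ![w, x, y, z] j i)

def pl {k : Type*} [CommRing k] (u v : Fin 4 → k) : Fin 6 → k := fun a =>
  match a with
  | 0 => u 0*v 1 - u 1*v 0
  | 1 => u 0*v 2 - u 2*v 0
  | 2 => u 0*v 3 - u 3*v 0
  | 3 => u 1*v 2 - u 2*v 1
  | 4 => u 1*v 3 - u 3*v 1
  | 5 => u 2*v 3 - u 3*v 2

def bf {k : Type*} [CommRing k] (p q : Fin 6 → k) : k :=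
  p 0*q 5 - p 1*q 4 + p 2*q 3 + p 3*q 2 - p 4*q 1 + p 5*q 0

lemma det4_eq_bf {k : Type*} [CommRing k] (u v x y : Fin 4 → k) :
    det4 u v x y = bf (pl u v) (pl x y) := by
  show Matrix.det _ = _
  rw [Matrix.det_succ_row_zero]
  simp [Fin.sum_univ_succ, Matrix.det_fin_three, bf, pl, Fin.succAbove,
    show (Fin.succ 2 : Fin 4) = 3 from rfl, show (Fin.castSucc 2 : Fin 4) = 2 from rfl,
    show (Fin.succ 1 : Fin 4) = 2 from rfl, show (Fin.castSucc 1 : Fin 4) = 1 from rfl,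
    show ((1:Fin 4) < 3) = True from by decide, show ((1:Fin 4) < 2) = True from by decide]
  ring

lemma bf_self {k : Type*} [CommRing k] (u v : Fin 4 → k) :
    bf (pl u v) (pl u v) = 0 := by
  simp [bf, pl]; ring

lemma bf_comm {k : Type*} [CommRing k] (p q : Fin 6 → k) : bf p q = bf q p := by
  simp [bf]; ring

lemma det4_zero_of_dep {k : Type*} [Field k] (u v x y : Fin 4 → k) (a b c d : k)
    (hne : ¬(a = 0 ∧ b = 0 ∧ c = 0 ∧ d = 0))
    (h : ∀ i, a * u i + b * v i + c * x i + d * y i = 0) :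
    det4 u v x y = 0 := by
  apply Matrix.exists_mulVec_eq_zero_iff.mp
  refine ⟨![a, b, c, d], ?_, ?_⟩
  · intro h0
    exact hne ⟨congrFun h0 0, congrFun h0 1, congrFun h0 2, congrFun h0 3⟩
  · funext i
    simp [Matrix.mulVec, dotProduct, Fin.sum_univ_four]
    linear_combination h i

lemma pl_ne_zero {k : Type*} [Field k] {u v : Fin 4 → k}
    (h : ∀ a c : k, (∀ i, a * u i + c * v i = 0) → a = 0 ∧ c = 0) :
    pl u v ≠ 0 := by
  intro hpl
  have hm0 : u 0*v 1 - u 1*v 0 = 0 := congrFun hpl 0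
  have hm1 : u 0*v 2 - u 2*v 0 = 0 := congrFun hpl 1
  have hm2 : u 0*v 3 - u 3*v 0 = 0 := congrFun hpl 2
  have hm3 : u 1*v 2 - u 2*v 1 = 0 := congrFun hpl 3
  have hm4 : u 1*v 3 - u 3*v 1 = 0 := congrFun hpl 4
  have hm5 : u 2*v 3 - u 3*v 2 = 0 := congrFun hpl 5
  by_cases hu : u = 0
  · have := h 1 0 (by intro i; simp [hu])
    exact one_ne_zero this.1
  · obtain ⟨a, ha⟩ : ∃ a, u a ≠ 0 := by
      by_contra hc; push_neg at hc; exact hu (funext hc)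
    have key : ∀ b, u a * v b - u b * v a = 0 := by
      intro b
      fin_cases a <;> fin_cases b <;>
        simp only [show ((⟨0, by norm_num⟩ : Fin 4)) = 0 from rfl,
          show ((⟨1, by norm_num⟩ : Fin 4)) = 1 from rfl,
          show ((⟨2, by norm_num⟩ : Fin 4)) = 2 from rfl,
          show ((⟨3, by norm_num⟩ : Fin 4)) = 3 from rfl] <;>
        first
          | ring1
          | linear_combination hm0 | linear_combination -hm0
          | linear_combination hm1 | linear_combination -hm1
          | linear_combination hm2 | linear_combination -hm2
          | linear_combination hm3 | linear_combination -hm3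
          | linear_combination hm4 | linear_combination -hm4
          | linear_combination hm5 | linear_combination -hm5
    have := h (v a) (-(u a)) (by intro i; linear_combination -(key i))
    exact ha (neg_eq_zero.mp this.2)


/-- **Common transversals force vanishing of the pentagon SLS resultant.**
Over a field `k` of characteristic different from 2, if `W_1, …, W_5` are 2-dimensional
subspaces of `k⁴`, with `W_i` spanned by `w_{i,1}, w_{i,2}`, and there is a 2-dimensional
subspace `T` with `T ⊓ W_i ≠ ⊥` for all `i`, then the determinant of the 5×5 Gram matrix
(zero diagonal, off-diagonal `(i,j)` entry `det[w_{i,1} w_{i,2} w_{j,1} w_{j,2}]`) is zero. -/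
theorem pentagon_resultant_vanishes_on_common_transversal
    {k : Type*} [Field k] (hchar : (2 : k) ≠ 0)
    (w : Fin 5 → Fin 2 → (Fin 4 → k))
    (hdim : ∀ i, Module.finrank k (Submodule.span k {w i 0, w i 1}) = 2)
    (T : Submodule k (Fin 4 → k))
    (hT : Module.finrank k T = 2)
    (hmeet : ∀ i, T ⊓ Submodule.span k {w i 0, w i 1} ≠ ⊥) :
    Matrix.det (Matrix.of fun i j : Fin 5 =>
      if i = j then 0 else det4 (w i 0) (w i 1) (w j 0) (w j 1)) = 0 := by
  classical
  -- basis of T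
  let b : Module.Basis (Fin 2) k T := Module.finBasisOfFinrankEq k T hT
  set t0 : Fin 4 → k := (b 0 : Fin 4 → k) with ht0
  set t1 : Fin 4 → k := (b 1 : Fin 4 → k) with ht1
  have li : LinearIndependent k (fun i : Fin 2 => (b i : Fin 4 → k)) :=
    b.linearIndependent.map' T.subtype T.ker_subtype
  have hind : ∀ a c : k, (∀ i, a * t0 i + c * t1 i = 0) → a = 0 ∧ c = 0 := by
    intro a c hac
    have hsum : ∑ i : Fin 2, (![a, c] : Fin 2 → k) i • (fun i : Fin 2 => (b i : Fin 4 → k)) i = 0 := by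
      rw [Fin.sum_univ_two]
      show a • (b 0 : Fin 4 → k) + c • (b 1 : Fin 4 → k) = 0
      funext i
      exact hac i
    have := Fintype.linearIndependent_iff.mp li ![a, c] hsum
    exact ⟨this 0, this 1⟩
  set τ : Fin 6 → k := pl t0 t1 with hτdef
  have hτ : τ ≠ 0 := pl_ne_zero hind
  set π : Fin 5 → (Fin 6 → k) := fun j => pl (w j 0) (w j 1) with hπdef
  -- orthogonality
  have horth : ∀ j, bf τ (π j) = 0 := by
    intro j
    obtain ⟨x, hx, hx0⟩ := Submodule.ne_bot_iff _ |>.mp (hmeet j)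
    obtain ⟨hxT, hxW⟩ := Submodule.mem_inf.mp hx
    obtain ⟨cc, dd, hcd⟩ := Submodule.mem_span_pair.mp hxW
    -- express x in basis of T
    have hxb : x = b.repr ⟨x, hxT⟩ 0 • t0 + b.repr ⟨x, hxT⟩ 1 • t1 := by
      have := b.sum_repr ⟨x, hxT⟩
      rw [Fin.sum_univ_two] at this
      have h2 := congrArg (Subtype.val) this
      exact h2.symm
    set r0 := b.repr ⟨x, hxT⟩ 0
    set r1 := b.repr ⟨x, hxT⟩ 1
    have hzero : det4 t0 t1 (w j 0) (w j 1) = 0 := by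
      apply det4_zero_of_dep _ _ _ _ r0 r1 (-cc) (-dd)
      · rintro ⟨h0, h1, -, -⟩
        apply hx0
        rw [hxb, h0, h1, zero_smul, zero_smul, add_zero]
      · intro i
        have e1 := congrFun hxb i
        have e2 := congrFun hcd i
        simp only [Pi.add_apply, Pi.smul_apply, smul_eq_mul] at e1 e2
        linear_combination -e1 - e2
    rw [hτdef, hπdef, ← det4_eq_bf]
    exact hzero
  -- linear functional
  let φ : (Fin 6 → k) →ₗ[k] k :=
    { toFun := fun q => bf τ q
      map_add' := by intros a b'; simp [bf]; ring
      map_smul' := by intros m a; simp [bf]; ring }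
  have hφ : ∀ q, φ q = bf τ q := fun _ => rfl
  have hker_ne_top : LinearMap.ker φ ≠ ⊤ := by
    intro htop
    apply hτ
    have hall : ∀ q : Fin 6 → k, bf τ q = 0 := by
      intro q
      have : q ∈ LinearMap.ker φ := by rw [htop]; trivial
      exact LinearMap.mem_ker.mp this
    funext a
    fin_cases a
    · simpa [bf, Pi.single_apply] using hall (Pi.single 5 1)
    · simpa [bf, Pi.single_apply] using hall (Pi.single 4 1)
    · simpa [bf, Pi.single_apply] using hall (Pi.single 3 1)
    · simpa [bf, Pi.single_apply] using hall (Pi.single 2 1)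
    · simpa [bf, Pi.single_apply] using hall (Pi.single 1 1)
    · simpa [bf, Pi.single_apply] using hall (Pi.single 0 1)
  have hlt : Module.finrank k (LinearMap.ker φ) < 6 := by
    have := Submodule.finrank_lt (K := k) (V := Fin 6 → k)
      hker_ne_top
    rwa [Module.finrank_fin_fun] at this
  -- six vectors in the kernel
  set vv : Fin 6 → (Fin 6 → k) := ![π 0, π 1, π 2, π 3, π 4, τ] with hvvdef
  have hvv : ∀ i, vv i ∈ LinearMap.ker φ := by
    intro i
    rw [LinearMap.mem_ker, hφ]
    fin_cases i
    · exact horth 0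
    · exact horth 1
    · exact horth 2
    · exact horth 3
    · exact horth 4
    · exact bf_self t0 t1
  have hdep : ¬ LinearIndependent k (fun i => (⟨vv i, hvv i⟩ : LinearMap.ker φ)) := by
    intro h
    have := h.fintype_card_le_finrank
    simp only [Fintype.card_fin] at this
    omega
  obtain ⟨g, hg, i0, hi0⟩ := Fintype.not_linearIndependent_iff.mp hdep
  have hg' : ∑ i : Fin 6, g i • vv i = 0 := by
    have h2 := congrArg (Subtype.val : LinearMap.ker φ → (Fin 6 → k)) hg
    simpa using h2
  have hrel : ∀ a, g 0 * π 0 a + g 1 * π 1 a + g 2 * π 2 a + g 3 * π 3 a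
      + g 4 * π 4 a + g 5 * τ a = 0 := by
    intro a
    have := congrFun hg' a
    simpa [Fin.sum_univ_six, hvvdef] using this
  -- the kernel vector for the Gram matrix
  set c : Fin 5 → k := fun j => g j.castSucc with hcdef
  have hc0 : c 0 = g 0 := rfl
  have hc1 : c 1 = g 1 := rfl
  have hc2 : c 2 = g 2 := rfl
  have hc3 : c 3 = g 3 := rfl
  have hc4 : c 4 = g 4 := rfl
  have hcne : c ≠ 0 := by
    intro hc
    have hz : ∀ j : Fin 5, g j.castSucc = 0 := fun j => congrFun hc j
    have hg5 : g 5 = 0 := by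
      have h5 : g 5 • τ = 0 := by
        have := hg'
        rw [Fin.sum_univ_six] at this
        have e0 : g 0 = 0 := hz 0
        have e1 : g 1 = 0 := hz 1
        have e2 : g 2 = 0 := hz 2
        have e3 : g 3 = 0 := hz 3
        have e4 : g 4 = 0 := hz 4
        rw [e0, e1, e2, e3, e4] at this
        simpa [hvvdef] using this
      rcases smul_eq_zero.mp h5 with h | h
      · exact h
      · exact absurd h hτ
    apply hi0
    fin_cases i0
    · exact hz 0
    · exact hz 1
    · exact hz 2
    · exact hz 3
    · exact hz 4
    · exact hg5
  -- rewrite Gram matrix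
  have hM : (Matrix.of fun i j : Fin 5 =>
      if i = j then 0 else det4 (w i 0) (w i 1) (w j 0) (w j 1))
      = Matrix.of (fun i j => bf (π i) (π j)) := by
    ext i j
    by_cases h : i = j
    · subst h
      simp only [Matrix.of_apply, if_pos rfl, hπdef]
      exact (bf_self _ _).symm
    · simp only [Matrix.of_apply, if_neg h, hπdef]
      exact det4_eq_bf _ _ _ _
  rw [hM]
  apply Matrix.exists_mulVec_eq_zero_iff.mp
  refine ⟨c, hcne, ?_⟩
  funext i
  have hbti : π i 0 * τ 5 - π i 1 * τ 4 + π i 2 * τ 3 + π i 3 * τ 2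
      - π i 4 * τ 1 + π i 5 * τ 0 = 0 := by
    have := horth i
    rw [bf_comm] at this
    simpa [bf] using this
  simp only [Matrix.mulVec, dotProduct, Fin.sum_univ_five, Matrix.of_apply,
    Pi.zero_apply, bf, hc0, hc1, hc2, hc3, hc4]
  linear_combination (π i 5) * hrel 0 - (π i 4) * hrel 1 + (π i 3) * hrel 2
    + (π i 2) * hrel 3 - (π i 1) * hrel 4 + (π i 0) * hrel 5 - g 5 * hbti
end
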